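/- arXiv:1706.04132 — 3 statements merged into one kernel-verified Lean document; each statement's English description precedes it below -/
import Mathlib

section
/- Let ν be a Borel measure on R^d \ {0} with ∫ min(|y|²,1) ν(dy) < ∞, and let g: R^d → [0,∞) be a probability-type density with ∫(1+|η|²)g(η)dη < ∞ satisfying |z|²/(1+|z|²) = ∫_{R^d} (1 - cos(η·z)) g(η) dη for all z ∈ R^d. Then for every x ≠ 0, ν({y : |y| ≥ |x|/2}) ≤ 5 ∫_{R^d} Re q(x, η/|x|) g(η) dη, where Re q(x,ξ) := ∫ (1 - cos(y·ξ)) ν(dy). -/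
/-!
For `y` with `|y| ≥ |x|/2`, the representation of `z ↦ |z|²/(1+|z|²)` at `z = y/|x|` gives
`∫ (1 - cos(y·η/|x|)) g(η) dη = |z|²/(1+|z|²) ≥ 1/5`. Integrating this over
`{y : |y| ≥ |x|/2}` against `ν` and exchanging the two integrals by Tonelli yields the bound;
the integrability condition on `ν` makes `ν` finite on that set, which is what Tonelli needs.
-/

open MeasureTheory

open scoped RealInnerProductSpace

lemma one_le_five_mul_sq_div_one_add_sq {t : ℝ} (ht : 1 / 2 ≤ t) :
    1 ≤ 5 * (t ^ 2 / (1 + t ^ 2)) := by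
  rw [mul_div_assoc', le_div_iff₀ (by positivity)]
  nlinarith

section

variable {E : Type*} [NormedAddCommGroup E] [MeasurableSpace E]

lemma measure_le_norm_lt_top_of_lintegral_min_sq_lt_top [OpensMeasurableSpace E]
    (ν : Measure E) (hν : ∫⁻ y, ENNReal.ofReal (min (‖y‖ ^ 2) 1) ∂ν < ⊤) {r : ℝ} (hr : 0 < r) :
    ν {y | r ≤ ‖y‖} < ⊤ := by
  set ε := ENNReal.ofReal (min (r ^ 2) 1)
  have hε : ε ≠ 0 := (ENNReal.ofReal_pos.mpr (lt_min (by positivity) one_pos)).ne'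
  have hsub : {y : E | r ≤ ‖y‖} ⊆ {y | ε ≤ ENNReal.ofReal (min (‖y‖ ^ 2) 1)} := fun y hy =>
    ENNReal.ofReal_le_ofReal (min_le_min_right 1 (pow_le_pow_left₀ hr.le hy 2))
  calc ν {y | r ≤ ‖y‖} ≤ (∫⁻ y, ENNReal.ofReal (min (‖y‖ ^ 2) 1) ∂ν) / ε :=
        (measure_mono hsub).trans <| meas_ge_le_lintegral_div (by fun_prop) hε ENNReal.ofReal_ne_top
    _ < ⊤ := ENNReal.div_lt_top hν.ne hε

lemma integrable_of_integrable_one_add_norm_sq_mul {μ : Measure E} [OpensMeasurableSpace E]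
    {g : E → ℝ} (hg : Integrable (fun η => (1 + ‖η‖ ^ 2) * g η) μ) : Integrable g μ := by
  have hpos (η : E) : 0 < 1 + ‖η‖ ^ 2 := by positivity
  refine (hg.bdd_mul (c := 1) (by fun_prop) (.of_forall fun η => ?_)).congr
    (.of_forall fun η => inv_mul_cancel_left₀ (hpos η).ne' (g η))
  rw [norm_inv, Real.norm_of_nonneg (hpos η).le]
  exact inv_le_one_of_one_le₀ (by nlinarith [sq_nonneg ‖η‖])

variable [InnerProductSpace ℝ E] [OpensMeasurableSpace E]

lemma lintegral_one_sub_cos_inner_mul (ρ : Measure E) {g : E → ℝ} (hg0 : ∀ η, 0 ≤ g η)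
    (hg : Integrable g ρ) (z : E) :
    ∫⁻ η, ENNReal.ofReal (1 - Real.cos ⟪η, z⟫) * ENNReal.ofReal (g η) ∂ρ =
      ENNReal.ofReal (∫ η, (1 - Real.cos ⟪η, z⟫) * g η ∂ρ) := by
  have hcos (η : E) : 0 ≤ 1 - Real.cos ⟪η, z⟫ := sub_nonneg.mpr (Real.cos_le_one _)
  have hint : Integrable (fun η => (1 - Real.cos ⟪η, z⟫) * g η) ρ := by
    refine hg.bdd_mul (c := 2) (by fun_prop) (.of_forall fun η => ?_)
    rw [Real.norm_of_nonneg (hcos η)]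
    linarith [Real.neg_one_le_cos ⟪η, z⟫]
  simp_rw [← ENNReal.ofReal_mul (hcos _)]
  exact (ofReal_integral_eq_lintegral_ofReal hint (.of_forall fun η => mul_nonneg (hcos η) (hg0 η))).symm

end

lemma measure_le_mul_lintegral_lintegral_of_one_le {α β : Type*} [MeasurableSpace α]
    [MeasurableSpace β] (ν : Measure α) (ρ : Measure β) [SFinite ρ] {S : Set α}
    (hS : MeasurableSet S) [SFinite (ν.restrict S)] {F : α → β → ENNReal}
    (hF : AEMeasurable (Function.uncurry F) ((ν.restrict S).prod ρ)) {C : ENNReal} (hC : C ≠ ⊤)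
    (hbound : ∀ y ∈ S, 1 ≤ C * ∫⁻ η, F y η ∂ρ) :
    ν S ≤ C * ∫⁻ η, ∫⁻ y, F y η ∂ν ∂ρ :=
  calc ν S = ∫⁻ _ in S, 1 ∂ν := by rw [setLIntegral_const, one_mul]
    _ ≤ ∫⁻ y in S, C * ∫⁻ η, F y η ∂ρ ∂ν := setLIntegral_mono' hS hbound
    _ = C * ∫⁻ η, ∫⁻ y in S, F y η ∂ν ∂ρ := by
      rw [lintegral_const_mul' _ _ hC, lintegral_lintegral_swap hF]
    _ ≤ C * ∫⁻ η, ∫⁻ y, F y η ∂ν ∂ρ := by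
      gcongr
      exact Measure.restrict_le_self

theorem stmt_7_general (d : ℕ) (ν : Measure (EuclideanSpace ℝ (Fin d)))
    (hν : ∫⁻ y, ENNReal.ofReal (min (‖y‖ ^ 2) 1) ∂ν < ⊤)
    (g : EuclideanSpace ℝ (Fin d) → ℝ) (hg0 : ∀ η, 0 ≤ g η)
    (hgint : Integrable (fun η : EuclideanSpace ℝ (Fin d) => (1 + ‖η‖ ^ 2) * g η))
    (hrep : ∀ z : EuclideanSpace ℝ (Fin d),
      ‖z‖ ^ 2 / (1 + ‖z‖ ^ 2) = ∫ η, (1 - Real.cos (inner ℝ η z : ℝ)) * g η) :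
    ∀ x : EuclideanSpace ℝ (Fin d), x ≠ 0 →
      ν {y | ‖x‖ / 2 ≤ ‖y‖} ≤ ENNReal.ofReal 5 *
        ∫⁻ η, (∫⁻ y, ENNReal.ofReal (1 - Real.cos (inner ℝ y (‖x‖⁻¹ • η) : ℝ)) ∂ν)
          * ENNReal.ofReal (g η) := by
  intro x hx
  have hxn : 0 < ‖x‖ := norm_pos_iff.mpr hx
  have hS : MeasurableSet {y : EuclideanSpace ℝ (Fin d) | ‖x‖ / 2 ≤ ‖y‖} :=
    measurableSet_le measurable_const measurable_norm
  have : IsFiniteMeasure (ν.restrict {y | ‖x‖ / 2 ≤ ‖y‖}) :=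
    isFiniteMeasure_restrict.mpr (measure_le_norm_lt_top_of_lintegral_min_sq_lt_top ν hν
      (half_pos hxn)).ne
  have hg := integrable_of_integrable_one_add_norm_sq_mul hgint
  simp_rw [← lintegral_mul_const' _ _ ENNReal.ofReal_ne_top]
  refine measure_le_mul_lintegral_lintegral_of_one_le ν volume hS
    (by have := hg.aemeasurable; fun_prop) ENNReal.ofReal_ne_top fun y hy => ?_
  have hy : 1 / 2 ≤ ‖‖x‖⁻¹ • y‖ := by
    rw [norm_smul, norm_inv, norm_norm, inv_mul_eq_div, le_div_iff₀ hxn]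
    linarith [hy.out]
  have hswap (η : EuclideanSpace ℝ (Fin d)) : ⟪y, ‖x‖⁻¹ • η⟫ = ⟪η, ‖x‖⁻¹ • y⟫ := by
    rw [real_inner_smul_right, real_inner_smul_right, real_inner_comm]
  simp_rw [hswap]
  rw [lintegral_one_sub_cos_inner_mul volume hg0 hg, ← hrep, ← ENNReal.ofReal_mul (by norm_num)]
  exact ENNReal.one_le_ofReal.mpr (one_le_five_mul_sq_div_one_add_sq hy)

theorem stmt_7 (d : ℕ) (ν : Measure (EuclideanSpace ℝ (Fin d)))
    (hν0 : ν {0} = 0)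
    (hν : ∫⁻ y, ENNReal.ofReal (min (‖y‖ ^ 2) 1) ∂ν < ⊤)
    (g : EuclideanSpace ℝ (Fin d) → ℝ) (hg0 : ∀ η, 0 ≤ g η)
    (hgint : Integrable (fun η : EuclideanSpace ℝ (Fin d) => (1 + ‖η‖ ^ 2) * g η))
    (hrep : ∀ z : EuclideanSpace ℝ (Fin d),
      ‖z‖ ^ 2 / (1 + ‖z‖ ^ 2) = ∫ η, (1 - Real.cos (inner ℝ η z : ℝ)) * g η) :
    ∀ x : EuclideanSpace ℝ (Fin d), x ≠ 0 →
      ν {y | ‖x‖ / 2 ≤ ‖y‖} ≤ ENNReal.ofReal 5 *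
        ∫⁻ η, (∫⁻ y, ENNReal.ofReal (1 - Real.cos (inner ℝ y (‖x‖⁻¹ • η) : ℝ)) ∂ν)
          * ENNReal.ofReal (g η) :=
  stmt_7_general d ν hν g hg0 hgint hrep
end

section
/- Suppose the measures ν(x,·) on R^d\{0} satisfy: (i) ∫_{|y| ≤ |x|/2} |y|² ν(x,dy) ≤ c(1+|x|²) for |x| ≥ 1 and (ii) ν(x, {|y| ≥ max(1,|x|/2)}) ≤ c for |x| ≥ 1. Define p(x,ξ) = ∫_{y≠0} (1 − e^{iy·ξ} + i y·ξ 1_{(0,|x|/2)}(|y|)) ν(x,dy). Then limsup_{|x|→∞} sup_{|ξ| ≤ |x|^{-1}} |p(x,ξ)| < ∞. -/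
/-!
On `|y| < |x|/2` the compensator turns the integrand into a second-order Taylor remainder of
`t ↦ e^{it}` at `t = ⟪y, ξ⟫`, and `|⟪y, ξ⟫| ≤ 1` there because `|ξ| ≤ |x|⁻¹`; so that part is
bounded by `|ξ|² ∫ |y|² ν(x, dy) ≤ |x|⁻² c (1 + |x|²)`. Off that ball the integrand has modulus
at most `2`, and for `|x| ≥ 2` the ball's complement is `{|y| ≥ max 1 (|x|/2)}`, of mass at most `c`.
-/

open MeasureTheory Complex

lemma norm_one_sub_exp_I_mul_add_I_mul_le {t : ℝ} (ht : |t| ≤ 1) :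
    ‖1 - exp (I * t) + I * t‖ ≤ t ^ 2 := by
  have hIt : ‖I * (t : ℂ)‖ = |t| := by simp
  calc ‖1 - exp (I * t) + I * t‖ = ‖exp (I * t) - 1 - I * t‖ := by rw [← norm_neg]; ring_nf
    _ ≤ ‖I * (t : ℂ)‖ ^ 2 := norm_exp_sub_one_sub_id_le (hIt ▸ ht)
    _ = t ^ 2 := by rw [hIt, sq_abs]

lemma norm_one_sub_exp_I_mul_le (t : ℝ) : ‖1 - exp (I * t)‖ ≤ 2 := by
  calc ‖1 - exp (I * t)‖ ≤ ‖(1 : ℂ)‖ + ‖exp (I * t)‖ := norm_sub_le _ _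
    _ = 2 := by rw [norm_one, norm_exp_I_mul_ofReal]; norm_num

lemma sq_mul_one_add_sq_le_two {a b : ℝ} (ha : 0 ≤ a) (hb : 1 ≤ b) (hab : a ≤ b⁻¹) :
    a ^ 2 * (1 + b ^ 2) ≤ 2 := by
  have hab' : a * b ≤ 1 :=
    calc a * b ≤ b⁻¹ * b := mul_le_mul_of_nonneg_right hab (by linarith)
      _ = 1 := inv_mul_cancel₀ (by positivity)
  have ha1 : a ^ 2 ≤ 1 := pow_le_one₀ ha (hab.trans (inv_le_one_of_one_le₀ hb))
  have hab1 : (a * b) ^ 2 ≤ 1 := pow_le_one₀ (by positivity) hab'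
  nlinarith

section LevyIntegrand

variable {E : Type*} [NormedAddCommGroup E] [InnerProductSpace ℝ E]

/-- `p x ξ` is the `ν x`-integral of `levyIntegrand (‖x‖ / 2) ξ`. -/
noncomputable def levyIntegrand (r : ℝ) (ξ y : E) : ℂ :=
  1 - exp (I * (inner ℝ y ξ : ℝ)) +
    Set.indicator {y : E | 0 < ‖y‖ ∧ ‖y‖ < r} (fun y => I * (inner ℝ y ξ : ℝ)) y

lemma levyIntegrand_of_norm_lt {r : ℝ} {ξ y : E} (hy : ‖y‖ < r) :
    levyIntegrand r ξ y = 1 - exp (I * (inner ℝ y ξ : ℝ)) + I * (inner ℝ y ξ : ℝ) := by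
  rcases eq_or_ne y 0 with rfl | hy0
  · simp [levyIntegrand]
  · simp [levyIntegrand, Set.indicator_of_mem, hy0, hy]

lemma levyIntegrand_of_le_norm {r : ℝ} {ξ y : E} (hy : r ≤ ‖y‖) :
    levyIntegrand r ξ y = 1 - exp (I * (inner ℝ y ξ : ℝ)) := by
  simp [levyIntegrand, Set.indicator_of_notMem, hy]

lemma norm_levyIntegrand_le_of_norm_lt {r : ℝ} {ξ y : E} (hrξ : r * ‖ξ‖ ≤ 1) (hy : ‖y‖ < r) :
    ‖levyIntegrand r ξ y‖ ≤ ‖ξ‖ ^ 2 * ‖y‖ ^ 2 := by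
  have hinner : |inner ℝ y ξ| ≤ ‖y‖ * ‖ξ‖ := abs_real_inner_le_norm y ξ
  have hyξ : ‖y‖ * ‖ξ‖ ≤ 1 := (mul_le_mul_of_nonneg_right hy.le (norm_nonneg ξ)).trans hrξ
  rw [levyIntegrand_of_norm_lt hy]
  calc _ ≤ inner ℝ y ξ ^ 2 := norm_one_sub_exp_I_mul_add_I_mul_le (hinner.trans hyξ)
    _ ≤ (‖y‖ * ‖ξ‖) ^ 2 := by rw [← sq_abs]; gcongr
    _ = ‖ξ‖ ^ 2 * ‖y‖ ^ 2 := by ring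

lemma norm_levyIntegrand_le_two_of_le_norm {r : ℝ} {ξ y : E} (hy : r ≤ ‖y‖) :
    ‖levyIntegrand r ξ y‖ ≤ 2 := by
  rw [levyIntegrand_of_le_norm hy]
  exact norm_one_sub_exp_I_mul_le _

variable [MeasurableSpace E] [OpensMeasurableSpace E]

lemma lintegral_norm_levyIntegrand_le (μ : Measure E) {r : ℝ} {ξ : E} (hrξ : r * ‖ξ‖ ≤ 1) :
    ∫⁻ y, ENNReal.ofReal ‖levyIntegrand r ξ y‖ ∂μ ≤
      ENNReal.ofReal (‖ξ‖ ^ 2) * ∫⁻ y in {y | ‖y‖ ≤ r}, ENNReal.ofReal (‖y‖ ^ 2) ∂μ +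
        2 * μ {y | r ≤ ‖y‖} := by
  set B : Set E := {y | ‖y‖ < r}
  have hB : MeasurableSet B := measurableSet_lt measurable_norm measurable_const
  have hBc : Bᶜ = {y | r ≤ ‖y‖} := by ext y; simp [B]
  rw [← lintegral_add_compl _ hB]
  gcongr
  · calc ∫⁻ y in B, ENNReal.ofReal ‖levyIntegrand r ξ y‖ ∂μ
        ≤ ∫⁻ y in B, ENNReal.ofReal (‖ξ‖ ^ 2) * ENNReal.ofReal (‖y‖ ^ 2) ∂μ :=
          setLIntegral_mono' hB fun y hy => by
            rw [← ENNReal.ofReal_mul (by positivity)]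
            exact ENNReal.ofReal_le_ofReal (norm_levyIntegrand_le_of_norm_lt hrξ hy)
      _ = ENNReal.ofReal (‖ξ‖ ^ 2) * ∫⁻ y in B, ENNReal.ofReal (‖y‖ ^ 2) ∂μ :=
          lintegral_const_mul' _ _ ENNReal.ofReal_ne_top
      _ ≤ _ := by
          gcongr
          exact fun y (hy : ‖y‖ < r) => hy.le
  · calc ∫⁻ y in Bᶜ, ENNReal.ofReal ‖levyIntegrand r ξ y‖ ∂μ ≤ ∫⁻ _ in Bᶜ, 2 ∂μ :=
          setLIntegral_mono' hB.compl fun y hy => by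
            rw [← ENNReal.ofReal_ofNat]
            exact ENNReal.ofReal_le_ofReal
              (norm_levyIntegrand_le_two_of_le_norm (not_lt.mp hy))
      _ = 2 * μ {y | r ≤ ‖y‖} := by rw [setLIntegral_const, hBc]

end LevyIntegrand

theorem stmt_15_general (d : ℕ) (c : ℝ) (hc : 0 < c)
    (ν : EuclideanSpace ℝ (Fin d) → Measure (EuclideanSpace ℝ (Fin d)))
    (hsmall : ∀ x : EuclideanSpace ℝ (Fin d), 1 ≤ ‖x‖ →
      ∫⁻ y in {y : EuclideanSpace ℝ (Fin d) | ‖y‖ ≤ ‖x‖ / 2},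
        ENNReal.ofReal (‖y‖ ^ 2) ∂(ν x) ≤ ENNReal.ofReal (c * (1 + ‖x‖ ^ 2)))
    (hlarge : ∀ x : EuclideanSpace ℝ (Fin d), 1 ≤ ‖x‖ →
      ν x {y | max 1 (‖x‖ / 2) ≤ ‖y‖} ≤ ENNReal.ofReal c)
    (p : EuclideanSpace ℝ (Fin d) → EuclideanSpace ℝ (Fin d) → ℂ)
    (hp : ∀ x ξ, p x ξ = ∫ y, ((1 : ℂ) - Complex.exp (Complex.I * ((inner ℝ y ξ : ℝ) : ℂ))
      + Set.indicator {y : EuclideanSpace ℝ (Fin d) | 0 < ‖y‖ ∧ ‖y‖ < ‖x‖ / 2}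
          (fun y => Complex.I * ((inner ℝ y ξ : ℝ) : ℂ)) y) ∂(ν x)) :
    ∃ M R : ℝ, ∀ x : EuclideanSpace ℝ (Fin d), R ≤ ‖x‖ →
      ∀ ξ : EuclideanSpace ℝ (Fin d), ‖ξ‖ ≤ ‖x‖⁻¹ → ‖p x ξ‖ ≤ M := by
  refine ⟨4 * c, 2, fun x hx ξ hξ => ?_⟩
  have hx1 : 1 ≤ ‖x‖ := by linarith
  have hrξ : ‖x‖ / 2 * ‖ξ‖ ≤ 1 :=
    calc ‖x‖ / 2 * ‖ξ‖ ≤ ‖x‖ / 2 * ‖x‖⁻¹ := by gcongr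
      _ = 1 / 2 := by field_simp
      _ ≤ 1 := by norm_num
  have hfar : {y : EuclideanSpace ℝ (Fin d) | ‖x‖ / 2 ≤ ‖y‖} = {y | max 1 (‖x‖ / 2) ≤ ‖y‖} := by
    rw [max_eq_right (by linarith)]
  have hξx := sq_mul_one_add_sq_le_two (norm_nonneg ξ) hx1 hξ
  have hbound : ∫⁻ y, ENNReal.ofReal ‖levyIntegrand (‖x‖ / 2) ξ y‖ ∂(ν x) ≤
      ENNReal.ofReal (4 * c) :=
    calc _ ≤ ENNReal.ofReal (‖ξ‖ ^ 2) *
          ∫⁻ y in {y | ‖y‖ ≤ ‖x‖ / 2}, ENNReal.ofReal (‖y‖ ^ 2) ∂(ν x) +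
          2 * ν x {y | ‖x‖ / 2 ≤ ‖y‖} := lintegral_norm_levyIntegrand_le _ hrξ
      _ ≤ ENNReal.ofReal (‖ξ‖ ^ 2) * ENNReal.ofReal (c * (1 + ‖x‖ ^ 2)) +
          ENNReal.ofReal 2 * ENNReal.ofReal c := by
        rw [hfar, ENNReal.ofReal_ofNat]
        gcongr
        exacts [hsmall x hx1, hlarge x hx1]
      _ = ENNReal.ofReal (‖ξ‖ ^ 2 * (c * (1 + ‖x‖ ^ 2)) + 2 * c) := by
        rw [← ENNReal.ofReal_mul (by positivity), ← ENNReal.ofReal_mul (by positivity),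
          ← ENNReal.ofReal_add (by positivity) (by positivity)]
      _ ≤ ENNReal.ofReal (4 * c) := ENNReal.ofReal_le_ofReal (by nlinarith)
  rw [hp]
  exact (norm_integral_le_lintegral_norm _).trans
    (ENNReal.toReal_le_of_le_ofReal (by positivity) hbound)

theorem stmt_15 (d : ℕ) (c : ℝ) (hc : 0 < c)
    (ν : EuclideanSpace ℝ (Fin d) → Measure (EuclideanSpace ℝ (Fin d)))
    (hν0 : ∀ x, ν x {0} = 0)
    (hsmall : ∀ x : EuclideanSpace ℝ (Fin d), 1 ≤ ‖x‖ →
      ∫⁻ y in {y : EuclideanSpace ℝ (Fin d) | ‖y‖ ≤ ‖x‖ / 2},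
        ENNReal.ofReal (‖y‖ ^ 2) ∂(ν x) ≤ ENNReal.ofReal (c * (1 + ‖x‖ ^ 2)))
    (hlarge : ∀ x : EuclideanSpace ℝ (Fin d), 1 ≤ ‖x‖ →
      ν x {y | max 1 (‖x‖ / 2) ≤ ‖y‖} ≤ ENNReal.ofReal c)
    (p : EuclideanSpace ℝ (Fin d) → EuclideanSpace ℝ (Fin d) → ℂ)
    (hp : ∀ x ξ, p x ξ = ∫ y, ((1 : ℂ) - Complex.exp (Complex.I * ((inner ℝ y ξ : ℝ) : ℂ))
      + Set.indicator {y : EuclideanSpace ℝ (Fin d) | 0 < ‖y‖ ∧ ‖y‖ < ‖x‖ / 2}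
          (fun y => Complex.I * ((inner ℝ y ξ : ℝ) : ℂ)) y) ∂(ν x)) :
    ∃ M R : ℝ, ∀ x : EuclideanSpace ℝ (Fin d), R ≤ ‖x‖ →
      ∀ ξ : EuclideanSpace ℝ (Fin d), ‖ξ‖ ≤ ‖x‖⁻¹ → ‖p x ξ‖ ≤ M :=
  stmt_15_general d c hc ν hsmall hlarge p hp
end

section
/- Let ν(x,·), x ∈ R^d, be a measurable family of finite measures on R^d\{0}, write ν_x = ν(x,·) and λ(x) := ν(x, R^d\{0}), and assume sup_x λ(x) ≤ λ < ∞ and ν(x, B(−x,r)) → 0 as |x| → ∞ for every r > 0; for f ∈ C_∞(R^d) (continuous, vanishing at infinity) define Pf(x) = ∫ f(x+y) ν_x(dy) + (λ − λ(x)) f(x). Then Pf vanishes at infinity: |Pf(x)| → 0 as |x| → ∞. -/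
open MeasureTheory Filter

theorem stmt_16 (d : ℕ) (lam : ℝ) (hlam : 0 ≤ lam)
    (ν : EuclideanSpace ℝ (Fin d) → Measure (EuclideanSpace ℝ (Fin d)))
    (hν0 : ∀ x, ν x {0} = 0)
    (hlambd : ∀ x, ν x Set.univ ≤ ENNReal.ofReal lam)
    (hdecay : ∀ r > (0 : ℝ), ∀ ε > (0 : ℝ), ∃ R : ℝ,
      ∀ x : EuclideanSpace ℝ (Fin d), R ≤ ‖x‖ →
        (ν x (Metric.ball (-x) r)).toReal ≤ ε)
    (f : EuclideanSpace ℝ (Fin d) → ℝ) (hf : Continuous f)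
    (hf0 : Tendsto f (Filter.cocompact (EuclideanSpace ℝ (Fin d))) (nhds 0))
    (P : EuclideanSpace ℝ (Fin d) → ℝ)
    (hP : ∀ x, P x = (∫ y, f (x + y) ∂(ν x)) + (lam - (ν x Set.univ).toReal) * f x) :
    Tendsto P (Filter.cocompact (EuclideanSpace ℝ (Fin d))) (nhds 0) := by
  have _triv : True := trivial
  -- finite measures
  haveI : ∀ x : EuclideanSpace ℝ (Fin d), IsFiniteMeasure (ν x) := fun x =>
    ⟨lt_of_le_of_lt (hlambd x) ENNReal.ofReal_lt_top⟩
  -- global bound on f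
  set g : ZeroAtInftyContinuousMap (EuclideanSpace ℝ (Fin d)) ℝ := ⟨⟨f, hf⟩, hf0⟩ with hg
  set M : ℝ := ‖g.toBCF‖ with hM
  have hM0 : 0 ≤ M := norm_nonneg _
  have hfM : ∀ z : EuclideanSpace ℝ (Fin d), |f z| ≤ M := fun z => by
    exact g.toBCF.norm_coe_le_norm z
  clear_value M
  -- decay of f in terms of norm
  have hfdecay : ∀ ε > (0:ℝ), ∃ r : ℝ, ∀ z : EuclideanSpace ℝ (Fin d), r ≤ ‖z‖ → |f z| ≤ ε := by
    intro ε hε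
    have := hf0
    rw [← Metric.cobounded_eq_cocompact, ← comap_norm_atTop, Metric.tendsto_nhds] at this
    have h2 := this ε hε
    rw [(atTop_basis.comap (norm : EuclideanSpace ℝ (Fin d) → ℝ)).eventually_iff] at h2
    obtain ⟨r, -, hr⟩ := h2
    exact ⟨r, fun z hz => le_of_lt (by simpa [Real.dist_eq] using hr hz)⟩
  -- λ(x).toReal ≤ lam
  have hlamx : ∀ x : EuclideanSpace ℝ (Fin d), (ν x Set.univ).toReal ≤ lam := fun x =>
    ENNReal.toReal_le_of_le_ofReal hlam (hlambd x)
  -- main estimate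
  rw [Metric.tendsto_nhds]
  intro ε hε
  set ε' : ℝ := ε / (3 * (lam + 1)) with hε'def
  have hε' : 0 < ε' := by positivity
  clear_value ε'
  obtain ⟨r₀, hr₀⟩ := hfdecay ε' hε'
  set r : ℝ := max r₀ 1 with hrdef
  have hr1 : (0:ℝ) < r := lt_of_lt_of_le one_pos (le_max_right _ _)
  have hrr₀ : r₀ ≤ r := le_max_left _ _
  clear_value r
  have hδ : (0:ℝ) < ε / (3 * (M + 1)) := by positivity
  obtain ⟨R, hR⟩ := hdecay r hr1 (ε / (3 * (M + 1))) hδ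
  rw [← Metric.cobounded_eq_cocompact]
  filter_upwards [eventually_cobounded_le_norm (max R r)] with x hx
  have hxR : R ≤ ‖x‖ := le_trans (le_max_left _ _) hx
  have hxr : r ≤ ‖x‖ := le_trans (le_max_right _ _) hx
  rw [Real.dist_eq, sub_zero, hP]
  -- integrability
  have hint : Integrable (fun y => f (x + y)) (ν x) := by
    refine Integrable.mono' (integrable_const M) ?_ ?_
    · exact ((hf.comp (continuous_const.add continuous_id)).aestronglyMeasurable)
    · exact Filter.Eventually.of_forall fun y => by simpa using hfM (x + y)
  -- split the integral
  set s : Set (EuclideanSpace ℝ (Fin d)) := Metric.ball (-x) r with hs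
  have hsm : MeasurableSet s := measurableSet_ball
  have hsplit : (∫ y, f (x + y) ∂(ν x))
      = (∫ y in s, f (x + y) ∂(ν x)) + (∫ y in sᶜ, f (x + y) ∂(ν x)) :=
    (integral_add_compl hsm hint).symm
  have hb1 : |∫ y in s, f (x + y) ∂(ν x)| ≤ M * (ν x s).toReal := by
    have := norm_setIntegral_le_of_norm_le_const (s := s) (μ := ν x)
      (C := M) (f := fun y => f (x + y)) (measure_lt_top _ _)
      (fun y _ => by simpa using hfM (x + y))
    simpa [Real.norm_eq_abs, mul_comm, measureReal_def] using this
  have hb2 : |∫ y in sᶜ, f (x + y) ∂(ν x)| ≤ ε' * lam := by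
    have hle : ∀ y ∈ sᶜ, ‖f (x + y)‖ ≤ ε' := by
      intro y hy
      have : r ≤ ‖x + y‖ := by
        have hy' : ¬ dist y (-x) < r := by simpa [hs, Metric.mem_ball] using hy
        have h3 : r ≤ dist y (-x) := not_lt.1 hy'
        rwa [dist_eq_norm, sub_neg_eq_add, add_comm] at h3
      simpa [Real.norm_eq_abs] using hr₀ _ (le_trans hrr₀ this)
    have := norm_setIntegral_le_of_norm_le_const (s := sᶜ) (μ := ν x)
      (C := ε') (f := fun y => f (x + y)) (measure_lt_top _ _) hle
    have h2 : (ν x sᶜ).toReal ≤ lam :=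
      le_trans (ENNReal.toReal_mono (by simp) (measure_mono (Set.subset_univ _))) (hlamx x)
    calc |∫ y in sᶜ, f (x + y) ∂(ν x)| ≤ ε' * (ν x sᶜ).toReal := by
          simpa [Real.norm_eq_abs, mul_comm, measureReal_def] using this
      _ ≤ ε' * lam := by nlinarith [hε'.le]
  have hb3 : |(lam - (ν x Set.univ).toReal) * f x| ≤ lam * ε' := by
    rw [abs_mul]
    have h1 : |lam - (ν x Set.univ).toReal| ≤ lam := by
      rw [abs_of_nonneg (by linarith [hlamx x])]
      have : (0:ℝ) ≤ (ν x Set.univ).toReal := ENNReal.toReal_nonneg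
      linarith
    have h2 : |f x| ≤ ε' := hr₀ x (hrr₀.trans hxr)
    exact mul_le_mul h1 h2 (abs_nonneg _) hlam
  have hball : (ν x s).toReal ≤ ε / (3 * (M + 1)) := hR x hxR
  have key : |(∫ y, f (x + y) ∂(ν x)) + (lam - (ν x Set.univ).toReal) * f x|
      ≤ M * (ε / (3 * (M + 1))) + ε' * lam + lam * ε' := by
    rw [hsplit]
    calc |(∫ y in s, f (x + y) ∂(ν x)) + (∫ y in sᶜ, f (x + y) ∂(ν x))
          + (lam - (ν x Set.univ).toReal) * f x|
        ≤ |∫ y in s, f (x + y) ∂(ν x)| + |∫ y in sᶜ, f (x + y) ∂(ν x)|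
          + |(lam - (ν x Set.univ).toReal) * f x| := by
          exact (abs_add_le _ _).trans (by gcongr; exact abs_add_le _ _)
      _ ≤ M * (ε / (3 * (M + 1))) + ε' * lam + lam * ε' := by
          gcongr
          exact hb1.trans (by nlinarith)
  refine lt_of_le_of_lt key ?_
  have h1 : M * (ε / (3 * (M + 1))) < ε / 3 := by
    have he : M * (ε / (3 * (M + 1))) = (M * ε) / (3 * (M + 1)) := by ring
    rw [he, div_lt_div_iff₀ (by positivity) (by norm_num)]
    nlinarith
  have h2 : ε' * lam < ε / 3 := by
    have hkey : ε' * (lam + 1) = ε / 3 := by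
      rw [hε'def]; field_simp
    have hexp : ε' * (lam + 1) = ε' * lam + ε' := by ring
    linarith
  linarith
end
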